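/- Let W be an ε-noise channel (0 ≤ ε < 1), let n ≥ 1, and let x_1,…,x_M ∈ X^n be a blocklength-n Sperner code for W of size M ≥ 1. Then the zero-undetected-error capacity satisfies C_eo(W) ≥ (1−ε)^n · (log M)/n. In particular, for fixed support of W, liminf_{ε→0} C_eo(W) ≥ C_sp(W). -/

import Mathlib

open scoped Classical
open Real Finset

/-- The `n`-letter extension of the channel `W`. -/
noncomputable def Wn {Y : Type*} (W : Y → Y → ℝ) (n : ℕ) (x y : Fin n → Y) : ℝ :=
  ∏ j, W (x j) (y j)

/-- The probability of erasure given that message `m` was sent, when the codebook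
`c` is used with a zero-undetected-error decoder. -/
noncomputable def erasureProb {Y : Type*} [Fintype Y] (W : Y → Y → ℝ) {n M : ℕ}
    (c : Fin M → Fin n → Y) (m : Fin M) : ℝ :=
  ∑ y ∈ Finset.univ.filter (fun y : Fin n → Y =>
      1 < (Finset.univ.filter (fun m' : Fin M => 0 < Wn W n (c m') y)).card),
    Wn W n (c m) y

/-- The zero-undetected-error capacity of the channel `W` with input alphabet
`X ⊆ Y`. -/
noncomputable def Ceo {Y : Type*} [Fintype Y] (X : Finset Y) (W : Y → Y → ℝ) : ℝ :=
  sSup (insert 0 {R : ℝ | 0 ≤ R ∧ ∀ δ : ℝ, 0 < δ →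
    ∃ (n M : ℕ) (c : Fin M → Fin n → Y), 1 ≤ n ∧ (∀ m j, c m j ∈ X) ∧
      Real.exp (n * R) ≤ (M : ℝ) ∧ ∀ m, erasureProb W c m < δ})

/-- The Sperner capacity of the channel `W` with input alphabet `X ⊆ Y`. -/
noncomputable def Csp {Y : Type*} [Fintype Y] (X : Finset Y) (W : Y → Y → ℝ) : ℝ :=
  sSup {r : ℝ | ∃ (n M : ℕ) (c : Fin M → Fin n → Y), 1 ≤ n ∧ 1 ≤ M ∧
    (∀ m j, c m j ∈ X) ∧ (∀ m m' : Fin M, m ≠ m' → Wn W n (c m') (c m) = 0) ∧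
    r = Real.log M / n}

/-!
Compose `Wⁿ` with the Sperner code `c` to get a super-channel on the `M` codewords: each is
received unchanged with probability at least `p = (1-ε)ⁿ`, and receiving a codeword rules out
every other one. For `K` random codewords of `k` super-letters, the zero-undetected-error decoder
erases only if another codeword is compatible with the output. Bounding that event by
`min 1 (K q) ≤ (K q) ^ ρ`, with `q` the chance that a random word is compatible, makes the bound
factorize over letters, and the average erasure probability is at most
`K ^ ρ (1 - p + p M ^ (-ρ)) ^ k`. If `n R < p log M`, a small `ρ > 0` makes this decay
exponentially for `K ≈ e ^ (k n R)`. Discarding the worse half of the messages and flattening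
super-letters gives codes of length `k n` with small maximal erasure probability.

For the second claim, pick a Sperner code whose rate is close to `C_sp(W)`. It remains a Sperner
code for every channel with the same support, and `(1-ε')ⁿ → 1` as `ε' → 0`.
-/

lemma min_one_le_rpow {x ρ : ℝ} (hx : 0 ≤ x) (hρ0 : 0 ≤ ρ) (hρ1 : ρ ≤ 1) :
    min 1 x ≤ x ^ ρ := by
  rcases le_total x 1 with h | h
  · calc min 1 x ≤ x := min_le_right _ _
      _ = x ^ (1 : ℝ) := (rpow_one x).symm
      _ ≤ x ^ ρ := rpow_le_rpow_of_exponent_ge' hx h hρ0 hρ1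
  · exact (min_le_left _ _).trans (one_le_rpow h hρ0)

lemma exists_exp_mul_mul_lt_one {p r x : ℝ} (hp : 0 < p) (hr : 0 ≤ r) (hx : 0 < x)
    (hrx : r < p * log x) :
    ∃ ρ, 0 < ρ ∧ ρ ≤ 1 ∧ exp (ρ * r) * (1 - p + p * x ^ (-ρ)) < 1 := by
  set L := log x
  have hL : 0 < L := pos_of_mul_pos_right (hr.trans_lt hrx) hp.le
  -- `ρ` is small enough that `r (1 + ρ L) < p L`; as `x ^ (-ρ) (1 + ρ L) ≤ 1`, this gives
  -- `ρ r < p (1 - x ^ (-ρ))`, and `1 - t ≤ exp (-t)` does the rest.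
  set ρ := min 1 ((p * L - r) / (2 * L * (r + 1)))
  have hρ0 : 0 < ρ := lt_min one_pos (div_pos (by linarith) (by positivity))
  have hρL : ρ * L * r < p * L - r := by
    have hρ : ρ * (2 * L * (r + 1)) ≤ p * L - r :=
      (le_div_iff₀ (by positivity)).1 (min_le_right _ _)
    nlinarith
  have hθ : x ^ (-ρ) * (1 + ρ * L) ≤ 1 := by
    rw [rpow_def_of_pos hx, show L * -ρ = -(ρ * L) by ring]
    calc exp (-(ρ * L)) * (1 + ρ * L) ≤ exp (-(ρ * L)) * exp (ρ * L) := by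
          gcongr
          linarith [add_one_le_exp (ρ * L)]
      _ = 1 := by rw [← exp_add]; simp
  have hexp : ρ * r < p * (1 - x ^ (-ρ)) := by
    have : ρ * r * (1 + ρ * L) < p * (1 - x ^ (-ρ)) * (1 + ρ * L) := by nlinarith
    exact lt_of_mul_lt_mul_right this (by positivity)
  refine ⟨ρ, hρ0, min_le_left _ _, ?_⟩
  calc exp (ρ * r) * (1 - p + p * x ^ (-ρ))
      ≤ exp (ρ * r) * exp (-(p * (1 - x ^ (-ρ)))) := by
        gcongr
        linarith [add_one_le_exp (-(p * (1 - x ^ (-ρ))))]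
    _ = exp (ρ * r - p * (1 - x ^ (-ρ))) := by rw [← exp_add]; ring_nf
    _ < 1 := exp_lt_one_iff.2 (by linarith)

lemma two_mul_ceil_pow_rpow_mul_pow_le {a l ρ : ℝ} (ha : 1 ≤ a) (hl : 0 ≤ l) (hρ0 : 0 ≤ ρ)
    (hρ1 : ρ ≤ 1) (k : ℕ) :
    (((2 * ⌈a ^ k⌉₊ : ℕ) : ℝ) ^ ρ) * l ^ k ≤ 4 * (a ^ ρ * l) ^ k := by
  have hak : 1 ≤ a ^ k := one_le_pow₀ ha
  have hK : ((2 * ⌈a ^ k⌉₊ : ℕ) : ℝ) ≤ 4 * a ^ k := by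
    push_cast
    linarith [Nat.ceil_lt_add_one (zero_le_one.trans hak)]
  have h4 : (4 : ℝ) ^ ρ ≤ 4 := by
    simpa using rpow_le_rpow_of_exponent_le (by norm_num : (1 : ℝ) ≤ 4) hρ1
  calc (((2 * ⌈a ^ k⌉₊ : ℕ) : ℝ) ^ ρ) * l ^ k ≤ (4 * a ^ k) ^ ρ * l ^ k := by gcongr
    _ = 4 ^ ρ * (a ^ ρ) ^ k * l ^ k := by
        rw [mul_rpow (by norm_num) (by positivity), rpow_pow_comm (by linarith)]
    _ ≤ 4 * (a ^ ρ) ^ k * l ^ k := by gcongr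
    _ = 4 * (a ^ ρ * l) ^ k := by ring

section Counting

variable {κ α : Type*} [Fintype κ] [DecidableEq κ] [Fintype α]

lemma card_filter_apply (j : κ) (P : α → Prop) :
    #{w : κ → α | P (w j)} = #{a | P a} * Fintype.card α ^ (Fintype.card κ - 1) := by
  have e : {w : κ → α // P (w j)} ≃ {a // P a} × ({i // i ≠ j} → α) :=
    ((Equiv.funSplitAt j α).subtypeEquiv (p := fun w => P (w j)) (q := fun x => P x.1)
      (fun _ => Iff.rfl)).trans Equiv.prodSubtypeFstEquivSubtypeProd
  simpa [Fintype.card_subtype, Fintype.card_fun, filter_ne'] using Fintype.card_congr e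

lemma card_filter_exists_apply_le (P : α → Prop) :
    #{w : κ → α | ∃ j, P (w j)} ≤
      Fintype.card κ * (#{a | P a} * Fintype.card α ^ (Fintype.card κ - 1)) := by
  calc #{w : κ → α | ∃ j, P (w j)} ≤ #(univ.biUnion fun j => ({w : κ → α | P (w j)} : Finset _)) :=
        card_le_card fun w hw => by simpa using hw
    _ ≤ ∑ j, #{w : κ → α | P (w j)} := card_biUnion_le
    _ = _ := by simp [card_filter_apply]

lemma card_filter_exists_apply_le_rpow [Nonempty α] (P : α → Prop) {ρ : ℝ} (hρ0 : 0 ≤ ρ)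
    (hρ1 : ρ ≤ 1) :
    (#{w : κ → α | ∃ j, P (w j)} : ℝ) ≤
      Fintype.card α ^ Fintype.card κ *
        (Fintype.card κ * #{a | P a} / Fintype.card α) ^ ρ := by
  have hfrac : 0 ≤ (Fintype.card κ * #{a | P a} / Fintype.card α : ℝ) := by positivity
  refine le_trans ?_ (mul_le_mul_of_nonneg_left (min_one_le_rpow hfrac hρ0 hρ1) (by positivity))
  rw [mul_min_of_nonneg _ _ (by positivity), mul_one, le_min_iff]
  constructor
  · exact_mod_cast (card_le_univ _).trans (Fintype.card_fun (α := κ) (β := α)).le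
  · have := card_filter_exists_apply_le (κ := κ) P
    rcases Nat.eq_zero_or_pos (Fintype.card κ) with h | h
    · simp_all
    calc (#{w : κ → α | ∃ j, P (w j)} : ℝ)
        ≤ Fintype.card κ * (#{a | P a} * (Fintype.card α : ℝ) ^ (Fintype.card κ - 1)) := by
          exact_mod_cast this
      _ = _ := by
        rw [← pow_sub_one_mul h.ne']
        field_simp

end Counting

lemma sum_mul_ite_exists_ne_le {ι α : Type*} [Fintype ι] [DecidableEq ι] [Fintype α]
    [Nonempty α] (i : ι) (f : α → ℝ) (hf : ∀ a, 0 ≤ f a) (P : α → Prop)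
    [DecidablePred fun u : ι → α => ∃ j ≠ i, P (u j)] {ρ : ℝ} (hρ0 : 0 ≤ ρ) (hρ1 : ρ ≤ 1) :
    ∑ u : ι → α, f (u i) * (if ∃ j ≠ i, P (u j) then 1 else 0) ≤
      Fintype.card α ^ (Fintype.card ι - 1) *
        (Fintype.card ι * #{a | P a} / Fintype.card α) ^ ρ * ∑ a, f a := by
  have hcount : (#{w : {j // j ≠ i} → α | ∃ j, P (w j)} : ℝ) ≤
      Fintype.card α ^ (Fintype.card ι - 1) *
        (Fintype.card ι * #{a | P a} / Fintype.card α) ^ ρ := by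
    have hcard : Fintype.card {j // j ≠ i} = Fintype.card ι - 1 := by
      simp [Fintype.card_subtype, filter_ne']
    refine (card_filter_exists_apply_le_rpow P hρ0 hρ1).trans ?_
    rw [hcard]
    gcongr
    omega
  have hterm : ∀ a (w : {j // j ≠ i} → α),
      f ((Equiv.funSplitAt i α).symm (a, w) i) *
          (if ∃ j ≠ i, P ((Equiv.funSplitAt i α).symm (a, w) j) then 1 else 0) =
        f a * (if ∃ j, P (w j) then 1 else 0) := by
    intro a w
    have hex : (∃ j ≠ i, P ((Equiv.funSplitAt i α).symm (a, w) j)) ↔ ∃ j, P (w j) := by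
      simp only [Equiv.funSplitAt_symm_apply]
      constructor
      · rintro ⟨j, hj, h⟩
        exact ⟨⟨j, hj⟩, by simpa [hj] using h⟩
      · rintro ⟨j, h⟩
        exact ⟨j, j.2, by simpa [j.2] using h⟩
    rw [if_congr hex rfl rfl, Equiv.funSplitAt_symm_apply, dif_pos rfl]
  rw [← (Equiv.funSplitAt i α).symm.sum_comp, Fintype.sum_prod_type]
  simp only [hterm, ← mul_sum, sum_boole]
  rw [mul_sum]
  exact sum_le_sum fun a _ => by rw [mul_comm]; exact mul_le_mul_of_nonneg_right hcount (hf a)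

lemma exists_embedding_forall_lt_of_sum_le {ι : Type*} [Fintype ι] {f : ι → ℝ}
    (hf : ∀ i, 0 ≤ f i) {δ : ℝ} (hδ : 0 < δ) {N N' : ℕ} (hcard : N + N' ≤ Fintype.card ι)
    (hsum : ∑ i, f i ≤ N' * δ) : ∃ e : Fin N ↪ ι, ∀ i, f (e i) < δ := by
  have hbad : #{i | δ ≤ f i} ≤ N' := by
    have : (#{i | δ ≤ f i} : ℝ) * δ ≤ N' * δ := by
      calc (#{i | δ ≤ f i} : ℝ) * δ ≤ ∑ i ∈ {i | δ ≤ f i}, f i := by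
            simpa using card_nsmul_le_sum _ f δ fun i hi => (mem_filter.1 hi).2
        _ ≤ ∑ i, f i := sum_le_sum_of_subset_of_nonneg (subset_univ _) fun i _ _ => hf i
        _ ≤ N' * δ := hsum
    exact_mod_cast le_of_mul_le_mul_right this hδ
  have hgood : N ≤ Fintype.card {i // f i < δ} := by
    have := card_filter_add_card_filter_not (s := univ) (fun i => f i < δ)
    simp only [not_lt, card_univ] at this
    rw [Fintype.card_subtype]
    omega
  obtain ⟨e⟩ := Function.Embedding.nonempty_of_card_le ((Fintype.card_fin N).trans_le hgood)
  exact ⟨e.trans (Function.Embedding.subtype _), fun i => (e i).2⟩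

section ProductChannel

variable {Z : Type*} (V : Z → Z → ℝ) {n : ℕ}

lemma Wn_nonneg {x : Fin n → Z} (hx : ∀ j z, 0 ≤ V (x j) z) (y : Fin n → Z) :
    0 ≤ Wn V n x y :=
  prod_nonneg fun j _ => hx j (y j)

lemma Wn_eq_zero_iff {x y : Fin n → Z} : Wn V n x y = 0 ↔ ∃ j, V (x j) (y j) = 0 := by
  simp [Wn, prod_eq_zero_iff]

lemma Wn_pos_iff {x : Fin n → Z} (hx : ∀ j z, 0 ≤ V (x j) z) (y : Fin n → Z) :
    0 < Wn V n x y ↔ ∀ j, 0 < V (x j) (y j) := by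
  simp only [(Wn_nonneg V hx y).lt_iff_ne', ne_eq, Wn_eq_zero_iff, not_exists,
    fun j => (hx j (y j)).lt_iff_ne']

lemma pow_le_Wn_self {q : ℝ} (hq : 0 ≤ q) {x : Fin n → Z} (hx : ∀ j, q ≤ V (x j) (x j)) :
    q ^ n ≤ Wn V n x x := by
  simpa [Wn] using prod_le_prod (s := univ) (fun _ _ => hq) fun j _ => hx j

variable [Fintype Z]

lemma sum_Wn_mul_prod (x : Fin n → Z) (g : Fin n → Z → ℝ) :
    ∑ y, Wn V n x y * ∏ j, g j (y j) = ∏ j, ∑ z, V (x j) z * g j z := by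
  simp only [Fintype.prod_sum, Wn, prod_mul_distrib]

lemma sum_Wn_eq_one {x : Fin n → Z} (hx : ∀ j, ∑ z, V (x j) z = 1) : ∑ y, Wn V n x y = 1 := by
  simpa [hx] using sum_Wn_mul_prod V x fun _ _ => 1

end ProductChannel

section Erasure

variable {Y : Type*} [Fintype Y] (W : Y → Y → ℝ) {n M : ℕ} {c : Fin M → Fin n → Y}

lemma erasureProb_nonneg (hW0 : ∀ m j z, 0 ≤ W (c m j) z) (m : Fin M) :
    0 ≤ erasureProb W c m :=
  sum_nonneg fun y _ => Wn_nonneg W (hW0 m) y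

lemma erasureProb_comp_le (hW0 : ∀ m j z, 0 ≤ W (c m j) z) {M' : ℕ} {g : Fin M' → Fin M}
    (hg : Function.Injective g) (m : Fin M') :
    erasureProb W (c ∘ g) m ≤ erasureProb W c (g m) := by
  refine sum_le_sum_of_subset_of_nonneg (monotone_filter_right _ fun y _ hy => ?_)
    fun y _ _ => Wn_nonneg W (hW0 (g m)) y
  refine hy.trans_le (card_le_card_of_injOn g (fun m' hm' => ?_) hg.injOn)
  simpa using hm'

lemma erasureProb_le_sum_mul_ite (hW0 : ∀ m j z, 0 ≤ W (c m j) z) (m : Fin M) :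
    erasureProb W c m ≤
      ∑ y, Wn W n (c m) y * if ∃ m' ≠ m, 0 < Wn W n (c m') y then 1 else 0 := by
  rw [erasureProb, sum_filter]
  refine sum_le_sum fun y _ => ?_
  split_ifs with hcard hex
  · rw [mul_one]
  · obtain ⟨m', hm', hne⟩ := exists_mem_ne hcard m
    exact absurd ⟨m', hne, (mem_filter.1 hm').2⟩ hex
  · exact mul_nonneg (Wn_nonneg W (hW0 m) y) zero_le_one
  · rw [mul_zero]

lemma erasureProb_eq_one_of_eq (hW0 : ∀ m j z, 0 ≤ W (c m j) z)
    (hW1 : ∀ m j, ∑ z, W (c m j) z = 1) {m m' : Fin M} (hne : m ≠ m') (heq : c m = c m') :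
    erasureProb W c m = 1 := by
  rw [← sum_Wn_eq_one W (hW1 m), erasureProb]
  refine sum_subset (filter_subset _ _) fun y _ hy => ?_
  by_contra hpos
  refine hy (mem_filter.2 ⟨mem_univ y, one_lt_card.2 ⟨m, ?_, m', ?_, hne⟩⟩)
  · simpa using (Wn_nonneg W (hW0 m) y).lt_of_ne' hpos
  · simpa [← heq] using (Wn_nonneg W (hW0 m) y).lt_of_ne' hpos

end Erasure

section Flatten

variable {Y : Type*} (W : Y → Y → ℝ) {k n : ℕ}

def flattenEquiv (k n : ℕ) : (Fin k → Fin n → Y) ≃ (Fin (k * n) → Y) :=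
  (Equiv.curry _ _ _).symm.trans (finProdFinEquiv.arrowCongr (Equiv.refl Y))

lemma Wn_flattenEquiv (x y : Fin k → Fin n → Y) :
    Wn W (k * n) (flattenEquiv k n x) (flattenEquiv k n y) = Wn (Wn W n) k x y := by
  simp only [Wn, flattenEquiv]
  rw [← finProdFinEquiv.prod_comp, Fintype.prod_prod_type]
  simp

lemma erasureProb_flattenEquiv [Fintype Y] {M : ℕ} (d : Fin M → Fin k → Fin n → Y) (m : Fin M) :
    erasureProb W (flattenEquiv k n ∘ d) m = erasureProb (Wn W n) d m := by
  simp only [erasureProb, sum_filter]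
  rw [← (flattenEquiv k n).sum_comp]
  simp [Wn_flattenEquiv]

end Flatten

section RandomCoding

variable {Z : Type*} (V : Z → Z → ℝ) {M : ℕ} (cb : Fin M → Z)

noncomputable def compatCount (z : Z) : ℕ := #{b | 0 < V (cb b) z}

variable {V cb}

lemma card_filter_Wn_pos (hV0 : ∀ b z, 0 ≤ V (cb b) z) {k : ℕ} (y : Fin k → Z) :
    #{v : Fin k → Fin M | 0 < Wn V k (cb ∘ v) y} = ∏ a, compatCount V cb (y a) := by
  simp only [compatCount]
  rw [← Fintype.card_piFinset]
  congr 1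
  ext v
  simpa [Fintype.mem_piFinset] using Wn_pos_iff V (x := cb ∘ v) (fun j => hV0 (v j)) y

lemma sum_Wn_mul_ite_exists_ne_le [Fintype Z] (hM : 0 < M) (hV0 : ∀ b z, 0 ≤ V (cb b) z)
    {ρ : ℝ} (hρ0 : 0 ≤ ρ) (hρ1 : ρ ≤ 1) {k K : ℕ} (m : Fin K) (y : Fin k → Z) :
    ∑ u : Fin K → Fin k → Fin M, Wn V k (cb ∘ u m) y *
        (if ∃ m' ≠ m, 0 < Wn V k (cb ∘ u m') y then 1 else 0) ≤
      (Fintype.card (Fin k → Fin M) : ℝ) ^ (K - 1) * (K : ℝ) ^ ρ *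
        ∑ v : Fin k → Fin M, Wn V k (cb ∘ v) y * ∏ a, ((compatCount V cb (y a) : ℝ) / M) ^ ρ := by
  have : Nonempty (Fin M) := ⟨⟨0, hM⟩⟩
  have hfrac : ((Fintype.card (Fin K) : ℝ) * #{v : Fin k → Fin M | 0 < Wn V k (cb ∘ v) y} /
      Fintype.card (Fin k → Fin M)) ^ ρ =
        (K : ℝ) ^ ρ * ∏ a, ((compatCount V cb (y a) : ℝ) / M) ^ ρ := by
    rw [card_filter_Wn_pos hV0, finsetProd_rpow _ _ (fun _ _ => by positivity),
      ← mul_rpow (by positivity) (by positivity)]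
    simp [prod_div_distrib, mul_div_assoc]
  refine (sum_mul_ite_exists_ne_le m (fun v => Wn V k (cb ∘ v) y)
    (fun v => Wn_nonneg V (fun j => hV0 (v j)) y) (fun v => 0 < Wn V k (cb ∘ v) y)
    hρ0 hρ1).trans_eq ?_
  rw [hfrac, Fintype.card_fin, ← sum_mul]
  ring

theorem sum_erasureProb_randomCode_le [Fintype Z] (hM : 0 < M) (hV0 : ∀ b z, 0 ≤ V (cb b) z)
    {ρ : ℝ} (hρ0 : 0 ≤ ρ) (hρ1 : ρ ≤ 1) {l : ℝ}
    (hl : ∀ b, ∑ z, V (cb b) z * ((compatCount V cb z : ℝ) / M) ^ ρ ≤ l) {k K : ℕ} (m : Fin K) :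
    ∑ u : Fin K → Fin k → Fin M, erasureProb V (fun i => cb ∘ u i) m ≤
      Fintype.card (Fin K → Fin k → Fin M) * ((K : ℝ) ^ ρ * l ^ k) := by
  set N : ℝ := (Fintype.card (Fin k → Fin M) : ℝ)
  have hletter : ∀ v : Fin k → Fin M,
      ∏ a, ∑ z, V (cb (v a)) z * ((compatCount V cb z : ℝ) / M) ^ ρ ≤ l ^ k := fun v =>
    calc ∏ a, ∑ z, V (cb (v a)) z * ((compatCount V cb z : ℝ) / M) ^ ρ
        ≤ ∏ _a : Fin k, l :=
          prod_le_prod (fun a _ => sum_nonneg fun z _ => by have := hV0 (v a) z; positivity)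
            fun a _ => hl (v a)
      _ = l ^ k := by simp
  calc ∑ u : Fin K → Fin k → Fin M, erasureProb V (fun i => cb ∘ u i) m
      ≤ ∑ y, ∑ u : Fin K → Fin k → Fin M, Wn V k (cb ∘ u m) y *
          (if ∃ m' ≠ m, 0 < Wn V k (cb ∘ u m') y then 1 else 0) := by
        rw [sum_comm]
        exact sum_le_sum fun u _ => erasureProb_le_sum_mul_ite _ (fun i j => hV0 (u i j)) m
    _ ≤ ∑ y, N ^ (K - 1) * (K : ℝ) ^ ρ *
          ∑ v : Fin k → Fin M, Wn V k (cb ∘ v) y * ∏ a, ((compatCount V cb (y a) : ℝ) / M) ^ ρ :=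
        sum_le_sum fun y _ => sum_Wn_mul_ite_exists_ne_le hM hV0 hρ0 hρ1 m y
    _ = N ^ (K - 1) * (K : ℝ) ^ ρ *
          ∑ v : Fin k → Fin M, ∏ a, ∑ z, V (cb (v a)) z * ((compatCount V cb z : ℝ) / M) ^ ρ := by
        rw [← mul_sum, sum_comm]
        congr 1
        exact sum_congr rfl fun v _ =>
          sum_Wn_mul_prod V (cb ∘ v) fun _ z => ((compatCount V cb z : ℝ) / M) ^ ρ
    _ ≤ N ^ (K - 1) * (K : ℝ) ^ ρ * ∑ _v : Fin k → Fin M, l ^ k := by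
        gcongr with v
        exact hletter v
    _ = Fintype.card (Fin K → Fin k → Fin M) * ((K : ℝ) ^ ρ * l ^ k) := by
        rw [sum_const, card_univ, nsmul_eq_mul, Fintype.card_fun (α := Fin K), Fintype.card_fin,
          Nat.cast_pow, ← pow_sub_one_mul m.pos.ne']
        ring

lemma compatCount_le (z : Z) : compatCount V cb z ≤ M :=
  (card_filter_le _ _).trans_eq (card_fin M)

lemma compatCount_self_le_one (hSp : ∀ a b, a ≠ b → V (cb b) (cb a) = 0) (a : Fin M) :
    compatCount V cb (cb a) ≤ 1 := by
  have hself : ∀ b ∈ ({b | 0 < V (cb b) (cb a)} : Finset (Fin M)), b = a := fun b hb =>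
    by_contra fun hne => (mem_filter.1 hb).2.ne' (hSp a b (Ne.symm hne))
  exact card_le_one.2 fun b hb b' hb' => (hself b hb).trans (hself b' hb').symm

lemma sum_mul_compatCount_rpow_le [Fintype Z] (hM : 0 < M) (hV0 : ∀ b z, 0 ≤ V (cb b) z)
    (hV1 : ∀ b, ∑ z, V (cb b) z = 1) (hSp : ∀ a b, a ≠ b → V (cb b) (cb a) = 0) {p : ℝ}
    (hp : ∀ b, p ≤ V (cb b) (cb b)) {ρ : ℝ} (hρ0 : 0 ≤ ρ) (b : Fin M) :
    ∑ z, V (cb b) z * ((compatCount V cb z : ℝ) / M) ^ ρ ≤ 1 - p + p * (M : ℝ) ^ (-ρ) := by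
  have hM' : (0 : ℝ) < M := by exact_mod_cast hM
  have hθ1 : (M : ℝ) ^ (-ρ) ≤ 1 :=
    rpow_le_one_of_one_le_of_nonpos (by exact_mod_cast hM) (by linarith)
  have hfrac_le_one : ∀ z, ((compatCount V cb z : ℝ) / M) ^ ρ ≤ 1 := fun z =>
    rpow_le_one (by positivity) ((div_le_one hM').2 (by exact_mod_cast compatCount_le z)) hρ0
  have hfrac_self : ((compatCount V cb (cb b) : ℝ) / M) ^ ρ ≤ (M : ℝ) ^ (-ρ) := by
    rw [rpow_neg hM'.le, ← inv_rpow hM'.le, ← one_div]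
    gcongr
    exact_mod_cast compatCount_self_le_one hSp b
  rw [← add_sum_erase _ _ (mem_univ (cb b))]
  have hsplit := add_sum_erase _ (V (cb b)) (mem_univ (cb b))
  rw [hV1 b] at hsplit
  calc V (cb b) (cb b) * ((compatCount V cb (cb b) : ℝ) / M) ^ ρ +
        ∑ z ∈ univ.erase (cb b), V (cb b) z * ((compatCount V cb z : ℝ) / M) ^ ρ
      ≤ V (cb b) (cb b) * (M : ℝ) ^ (-ρ) + ∑ z ∈ univ.erase (cb b), V (cb b) z := by
        gcongr with z
        · exact hV0 b _
        · exact mul_le_of_le_one_right (hV0 b z) (hfrac_le_one z)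
    _ = 1 - (1 - (M : ℝ) ^ (-ρ)) * V (cb b) (cb b) := by linarith
    _ ≤ 1 - p + p * (M : ℝ) ^ (-ρ) := by nlinarith [hp b]

theorem exists_code_sum_erasureProb_le [Fintype Z] (hM : 0 < M) (hV0 : ∀ b z, 0 ≤ V (cb b) z)
    (hV1 : ∀ b, ∑ z, V (cb b) z = 1) (hSp : ∀ a b, a ≠ b → V (cb b) (cb a) = 0) {p : ℝ}
    (hp : ∀ b, p ≤ V (cb b) (cb b)) {ρ : ℝ} (hρ0 : 0 ≤ ρ) (hρ1 : ρ ≤ 1) (k K : ℕ) :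
    ∃ u : Fin K → Fin k → Fin M, ∑ m, erasureProb V (fun i => cb ∘ u i) m ≤
      K * ((K : ℝ) ^ ρ * (1 - p + p * (M : ℝ) ^ (-ρ)) ^ k) := by
  have : Nonempty (Fin M) := ⟨⟨0, hM⟩⟩
  have hbound := fun m : Fin K => sum_erasureProb_randomCode_le hM hV0 hρ0 hρ1
    (sum_mul_compatCount_rpow_le hM hV0 hV1 hSp hp hρ0) (k := k) m
  obtain ⟨u, -, hu⟩ := exists_le_of_sum_le (s := univ) univ_nonempty
    (f := fun u : Fin K → Fin k → Fin M => ∑ m, erasureProb V (fun i => cb ∘ u i) m)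
    (g := fun _ => K * ((K : ℝ) ^ ρ * (1 - p + p * (M : ℝ) ^ (-ρ)) ^ k)) (by
      rw [sum_comm]
      refine (sum_le_sum fun m _ => hbound m).trans_eq ?_
      simp only [sum_const, card_univ, nsmul_eq_mul, Fintype.card_fin]
      ring)
  exact ⟨u, hu⟩

end RandomCoding

lemma exists_embedding_erasureProb_flattenEquiv_lt {Y : Type*} [Fintype Y] {W : Y → Y → ℝ}
    {n k K K₀ : ℕ} {d : Fin K → Fin k → Fin n → Y} (hW0 : ∀ i a j z, 0 ≤ W (d i a j) z)
    (hK : K₀ + K₀ ≤ K) {δ : ℝ} (hδ : 0 < δ) (hsum : ∑ i, erasureProb (Wn W n) d i ≤ K₀ * δ) :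
    ∃ e : Fin K₀ ↪ Fin K, ∀ i, erasureProb W (flattenEquiv k n ∘ d ∘ e) i < δ := by
  have hV0 : ∀ i a z, 0 ≤ Wn W n (d i a) z := fun i a => Wn_nonneg W (hW0 i a)
  obtain ⟨e, he⟩ := exists_embedding_forall_lt_of_sum_le (erasureProb_nonneg _ hV0) hδ
    (by simpa using hK) hsum
  refine ⟨e, fun i => ?_⟩
  rw [erasureProb_flattenEquiv]
  exact (erasureProb_comp_le _ hV0 e.injective i).trans_lt (he i)

section Capacity

variable {Y : Type*}

def IsSpernerCode (W : Y → Y → ℝ) {n M : ℕ} (c : Fin M → Fin n → Y) : Prop :=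
  ∀ m m', m ≠ m' → Wn W n (c m') (c m) = 0

/-- `Ceo X W` is by definition `sSup (insert 0 {R | IsZueAchievableRate X W R})`. -/
def IsZueAchievableRate [Fintype Y] (X : Finset Y) (W : Y → Y → ℝ) (R : ℝ) : Prop :=
  0 ≤ R ∧ ∀ δ : ℝ, 0 < δ →
    ∃ (n M : ℕ) (c : Fin M → Fin n → Y), 1 ≤ n ∧ (∀ m j, c m j ∈ X) ∧
      Real.exp (n * R) ≤ (M : ℝ) ∧ ∀ m, erasureProb W c m < δ

variable {X : Finset Y} {W : Y → Y → ℝ}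

lemma IsSpernerCode.of_pos_iff {W' : Y → Y → ℝ} (hW0' : ∀ x ∈ X, ∀ y, 0 ≤ W' x y)
    (hsupp : ∀ x ∈ X, ∀ y, (0 < W' x y ↔ 0 < W x y))
    {n M : ℕ} {c : Fin M → Fin n → Y} (hc : ∀ m j, c m j ∈ X) (h : IsSpernerCode W c) :
    IsSpernerCode W' c := by
  intro m m' hne
  obtain ⟨j, hj⟩ := (Wn_eq_zero_iff W).1 (h m m' hne)
  refine (Wn_eq_zero_iff W').2 ⟨j, le_antisymm (not_lt.1 fun hpos => ?_) (hW0' _ (hc m' j) _)⟩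
  exact ((hsupp _ (hc m' j) _).1 hpos).ne' hj

lemma exists_spernerCode_lt_log_div [Fintype Y] {n M : ℕ} (hn : 1 ≤ n) (hM : 1 ≤ M)
    {c : Fin M → Fin n → Y} (hc : ∀ m j, c m j ∈ X) (hSp : IsSpernerCode W c) {t : ℝ}
    (ht : t < Csp X W) :
    ∃ (n M : ℕ) (c : Fin M → Fin n → Y), 1 ≤ n ∧ 1 ≤ M ∧ (∀ m j, c m j ∈ X) ∧
      IsSpernerCode W c ∧ t < log M / n := by
  obtain ⟨r, ⟨n', M', c', hn', hM', hc', hSp', rfl⟩, hr⟩ :=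
    exists_lt_of_lt_csSup (by exact ⟨log M / n, n, M, c, hn, hM, hc, hSp, rfl⟩) ht
  exact ⟨n', M', c', hn', hM', hc', hSp', hr⟩

lemma IsZueAchievableRate.le_log_card [Fintype Y] (hW0 : ∀ x ∈ X, ∀ y, 0 ≤ W x y)
    (hW1 : ∀ x ∈ X, ∑ y, W x y = 1) {R : ℝ} (hR : IsZueAchievableRate X W R) :
    R ≤ log (Fintype.card Y) := by
  obtain ⟨n, M, c, hn, hc, hexp, herr⟩ := hR.2 1 one_pos
  have hinj : Function.Injective c := fun m m' heq => by_contra fun hne =>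
    (herr m).ne (erasureProb_eq_one_of_eq W (fun m j => hW0 _ (hc m j))
      (fun m j => hW1 _ (hc m j)) hne heq)
  have hM : (M : ℝ) ≤ (Fintype.card Y : ℝ) ^ n := by
    have := Fintype.card_le_of_injective c hinj
    simp only [Fintype.card_fin, Fintype.card_fun] at this
    exact_mod_cast this
  have hlog : n * R ≤ n * log (Fintype.card Y) := by
    rw [← log_exp (n * R), ← log_pow]
    exact log_le_log (exp_pos _) (hexp.trans hM)
  exact le_of_mul_le_mul_left hlog (by exact_mod_cast hn)

lemma le_Ceo_of_forall_lt [Fintype Y] (hW0 : ∀ x ∈ X, ∀ y, 0 ≤ W x y)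
    (hW1 : ∀ x ∈ X, ∑ y, W x y = 1) {R₀ : ℝ}
    (h : ∀ R, 0 ≤ R → R < R₀ → IsZueAchievableRate X W R) : R₀ ≤ Ceo X W := by
  have hbdd : BddAbove (insert 0 {R | IsZueAchievableRate X W R}) := by
    refine ⟨max 0 (log (Fintype.card Y)), ?_⟩
    rintro R (rfl | hR)
    · exact le_max_left _ _
    · exact (hR.le_log_card hW0 hW1).trans (le_max_right _ _)
  have h0 : 0 ≤ Ceo X W := le_csSup hbdd (Set.mem_insert _ _)
  refine le_of_forall_lt fun t ht => ?_
  rcases lt_or_ge t 0 with ht0 | ht0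
  · exact ht0.trans_le h0
  have hmid : IsZueAchievableRate X W ((t + R₀) / 2) := h _ (by linarith) (by linarith)
  exact (show t < (t + R₀) / 2 by linarith).trans_le
    (le_csSup hbdd (Set.mem_insert_of_mem _ hmid))

theorem IsSpernerCode.exists_code_erasureProb_lt [Fintype Y] (hW0 : ∀ x ∈ X, ∀ y, 0 ≤ W x y)
    (hW1 : ∀ x ∈ X, ∑ y, W x y = 1) {n M : ℕ} {c : Fin M → Fin n → Y} (hc : ∀ m j, c m j ∈ X)
    (hSp : IsSpernerCode W c) (hM : 0 < M) {p : ℝ} (hp : ∀ m, p ≤ Wn W n (c m) (c m)) {ρ : ℝ}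
    (hρ0 : 0 ≤ ρ) (hρ1 : ρ ≤ 1) (k K₀ : ℕ) {δ : ℝ} (hδ : 0 < δ)
    (hbound : 2 * (((2 * K₀ : ℕ) : ℝ) ^ ρ * (1 - p + p * (M : ℝ) ^ (-ρ)) ^ k) ≤ δ) :
    ∃ c' : Fin K₀ → Fin (k * n) → Y, (∀ m j, c' m j ∈ X) ∧ ∀ m, erasureProb W c' m < δ := by
  have hV0 : ∀ b z, 0 ≤ Wn W n (c b) z := fun b => Wn_nonneg W fun j => hW0 _ (hc b j)
  have hV1 : ∀ b, ∑ z, Wn W n (c b) z = 1 := fun b => sum_Wn_eq_one W fun j => hW1 _ (hc b j)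
  set B := ((2 * K₀ : ℕ) : ℝ) ^ ρ * (1 - p + p * (M : ℝ) ^ (-ρ)) ^ k
  obtain ⟨u, hu⟩ := exists_code_sum_erasureProb_le hM hV0 hV1 hSp hp hρ0 hρ1 k (2 * K₀)
  have hsum : ((2 * K₀ : ℕ) : ℝ) * B ≤ K₀ * δ := by
    push_cast
    linarith [mul_le_mul_of_nonneg_left hbound (Nat.cast_nonneg K₀)]
  obtain ⟨e, he⟩ := exists_embedding_erasureProb_flattenEquiv_lt (K₀ := K₀)
    (fun i a j z => hW0 _ (hc _ j) z) (by omega) hδ (hu.trans hsum)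
  exact ⟨flattenEquiv k n ∘ (fun i => c ∘ u i) ∘ e, fun i j => hc _ _, he⟩

theorem IsSpernerCode.isZueAchievableRate [Fintype Y] (hW0 : ∀ x ∈ X, ∀ y, 0 ≤ W x y)
    (hW1 : ∀ x ∈ X, ∑ y, W x y = 1) {n M : ℕ} (hn : 1 ≤ n) {c : Fin M → Fin n → Y}
    (hc : ∀ m j, c m j ∈ X) (hSp : IsSpernerCode W c) {p : ℝ} (hp0 : 0 < p)
    (hp : ∀ m, p ≤ Wn W n (c m) (c m)) {R : ℝ} (hR0 : 0 ≤ R) (hR : n * R < p * log M) :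
    IsZueAchievableRate X W R := by
  refine ⟨hR0, fun δ hδ => ?_⟩
  have hM : 0 < M := by
    have hlog : 0 < log M :=
      pos_of_mul_pos_right ((by positivity : (0 : ℝ) ≤ n * R).trans_lt hR) hp0.le
    exact Nat.pos_of_ne_zero fun h => by simp [h] at hlog
  obtain ⟨ρ, hρ0, hρ1, hb⟩ := exists_exp_mul_mul_lt_one hp0 (by positivity) (by positivity) hR
  set l := 1 - p + p * (M : ℝ) ^ (-ρ)
  have hl0 : 0 ≤ l := by
    have hV0 : ∀ b z, 0 ≤ Wn W n (c b) z := fun b => Wn_nonneg W fun j => hW0 _ (hc b j)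
    refine (sum_nonneg fun z _ => ?_).trans (sum_mul_compatCount_rpow_le hM hV0
      (fun b => sum_Wn_eq_one W fun j => hW1 _ (hc b j)) hSp hp hρ0.le ⟨0, hM⟩)
    have := hV0 ⟨0, hM⟩ z
    positivity
  set b := exp (ρ * (n * R)) * l
  obtain ⟨k, hk1, hk⟩ : ∃ k, 1 ≤ k ∧ 8 * b ^ k < δ := by
    have hlim := (tendsto_pow_atTop_nhds_zero_of_lt_one (by positivity) hb).const_mul 8
    rw [mul_zero] at hlim
    exact ((Filter.eventually_ge_atTop 1).and (hlim.eventually (gt_mem_nhds hδ))).exists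
  set K₀ := ⌈exp (n * R) ^ k⌉₊
  have hbound : 2 * (((2 * K₀ : ℕ) : ℝ) ^ ρ * l ^ k) ≤ δ := by
    have hK := two_mul_ceil_pow_rpow_mul_pow_le
      (one_le_exp (by positivity : (0 : ℝ) ≤ n * R)) hl0 hρ0.le hρ1 k
    rw [← exp_mul, mul_comm (n * R)] at hK
    linarith
  obtain ⟨c', hc', herr⟩ :=
    hSp.exists_code_erasureProb_lt hW0 hW1 hc hM hp hρ0.le hρ1 k K₀ hδ hbound
  refine ⟨k * n, K₀, c', Nat.one_le_iff_ne_zero.2 (by positivity), hc', ?_, herr⟩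
  calc exp (↑(k * n) * R) = exp (n * R) ^ k := by rw [← exp_nat_mul]; push_cast; ring_nf
    _ ≤ K₀ := Nat.le_ceil _

theorem pow_mul_log_div_le_Ceo [Fintype Y] (hW0 : ∀ x ∈ X, ∀ y, 0 ≤ W x y)
    (hW1 : ∀ x ∈ X, ∑ y, W x y = 1) {ε : ℝ} (hε1 : ε < 1) (hnoise : ∀ x ∈ X, 1 - ε ≤ W x x)
    {n M : ℕ} (hn : 1 ≤ n) {c : Fin M → Fin n → Y} (hc : ∀ m j, c m j ∈ X)
    (hSp : IsSpernerCode W c) : (1 - ε) ^ n * (log M / n) ≤ Ceo X W := by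
  refine le_Ceo_of_forall_lt hW0 hW1 fun R hR0 hR => hSp.isZueAchievableRate hW0 hW1 hn hc
    (pow_pos (sub_pos.2 hε1) n) (fun m => pow_le_Wn_self W (sub_nonneg.2 hε1.le)
      fun j => hnoise _ (hc m j)) hR0 ?_
  have hn' : (0 : ℝ) < n := by exact_mod_cast hn
  rw [← mul_div_assoc, lt_div_iff₀ hn'] at hR
  linarith

end Capacity

theorem zue_capacity_ge_sperner_code_general {Y : Type*} [Fintype Y] (X : Finset Y)
    (W : Y → Y → ℝ) (ε : ℝ) (hε1 : ε < 1)
    (hW0 : ∀ x ∈ X, ∀ y, 0 ≤ W x y)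
    (hW1 : ∀ x ∈ X, ∑ y, W x y = 1)
    (hnoise : ∀ x ∈ X, 1 - ε ≤ W x x)
    {n M : ℕ} (hn : 1 ≤ n) (hM : 1 ≤ M) (c : Fin M → Fin n → Y)
    (hc : ∀ m j, c m j ∈ X)
    (hSperner : ∀ m m' : Fin M, m ≠ m' → Wn W n (c m') (c m) = 0) :
    (1 - ε) ^ n * (Real.log M / n) ≤ Ceo X W ∧
    ∀ δ : ℝ, 0 < δ → ∃ ε₀ : ℝ, 0 < ε₀ ∧
      ∀ ε' : ℝ, 0 ≤ ε' → ε' < ε₀ →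
        ∀ W' : Y → Y → ℝ,
          (∀ x ∈ X, ∀ y, 0 ≤ W' x y) →
          (∀ x ∈ X, ∑ y, W' x y = 1) →
          (∀ x ∈ X, 1 - ε' ≤ W' x x) →
          (∀ x ∈ X, ∀ y, (0 < W' x y ↔ 0 < W x y)) →
          Csp X W - δ ≤ Ceo X W' := by
  refine ⟨pow_mul_log_div_le_Ceo hW0 hW1 hε1 hnoise hn hc hSperner, fun δ hδ => ?_⟩
  obtain ⟨n₁, M₁, c₁, hn₁, -, hc₁, hSp₁, hlt⟩ :=
    exists_spernerCode_lt_log_div hn hM hc hSperner (sub_lt_self (Csp X W) (half_pos hδ))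
  set r := log M₁ / n₁
  have hclose : ∀ᶠ ε' in nhds 0, ε' < 1 ∧ r - δ / 2 < (1 - ε') ^ n₁ * r := by
    have hcont : Continuous fun ε' : ℝ => (1 - ε') ^ n₁ * r := by fun_prop
    exact (gt_mem_nhds one_pos).and (hcont.tendsto' 0 r (by simp) |>.eventually
      (lt_mem_nhds (by linarith)))
  obtain ⟨ε₀, hε₀, hball⟩ := Metric.eventually_nhds_iff.1 hclose
  refine ⟨ε₀, hε₀, fun ε' hε'0 hε' W' hW0' hW1' hnoise' hsupp => ?_⟩
  obtain ⟨hε'1, hr⟩ := hball (by rwa [dist_0_eq_abs, abs_of_nonneg hε'0])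
  have := pow_mul_log_div_le_Ceo hW0' hW1' hε'1 hnoise' hn₁ hc₁ (hSp₁.of_pos_iff hW0' hsupp hc₁)
  linarith

/-- If `W` is an `ε`-noise channel and `c` is a blocklength-`n` Sperner code of
size `M`, then `C_eo(W) ≥ (1-ε)ⁿ (log M)/n`.  In particular (second conjunct),
for fixed support of the transition law, `liminf_{ε→0} C_eo ≥ C_sp`: for every
`δ > 0` there is an `ε₀ > 0` such that every `ε'`-noise channel `W'` with
`ε' < ε₀` whose transition law has the same support as `W` satisfies
`C_eo(W') ≥ C_sp(W) - δ`. -/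
theorem zue_capacity_ge_sperner_code {Y : Type*} [Fintype Y] (X : Finset Y)
    (hX : X.Nonempty) (W : Y → Y → ℝ) (ε : ℝ) (hε0 : 0 ≤ ε) (hε1 : ε < 1)
    (hW0 : ∀ x ∈ X, ∀ y, 0 ≤ W x y)
    (hW1 : ∀ x ∈ X, ∑ y, W x y = 1)
    (hnoise : ∀ x ∈ X, 1 - ε ≤ W x x)
    {n M : ℕ} (hn : 1 ≤ n) (hM : 1 ≤ M) (c : Fin M → Fin n → Y)
    (hc : ∀ m j, c m j ∈ X)
    (hSperner : ∀ m m' : Fin M, m ≠ m' → Wn W n (c m') (c m) = 0) :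
    (1 - ε) ^ n * (Real.log M / n) ≤ Ceo X W ∧
    ∀ δ : ℝ, 0 < δ → ∃ ε₀ : ℝ, 0 < ε₀ ∧
      ∀ ε' : ℝ, 0 ≤ ε' → ε' < ε₀ →
        ∀ W' : Y → Y → ℝ,
          (∀ x ∈ X, ∀ y, 0 ≤ W' x y) →
          (∀ x ∈ X, ∑ y, W' x y = 1) →
          (∀ x ∈ X, 1 - ε' ≤ W' x x) →
          (∀ x ∈ X, ∀ y, (0 < W' x y ↔ 0 < W x y)) →
          Csp X W - δ ≤ Ceo X W' :=
  zue_capacity_ge_sperner_code_general X W ε hε1 hW0 hW1 hnoise hn hM c hc hSperner
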